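/- Fix δ ∈ (0,1/2). Let X^n be uniformly distributed on {0,1}^n and let Y_(1)^n, Y_(2)^n be obtained from X^n by passing it through two independent binary symmetric channels with crossover probability δ. Let Y' = (Y_(1)^n, Y_(2)^n) and, for each realization of Y', let G(·|Y') be a guessing function for the conditional distribution of X^n given Y'. Then lim_{n→∞} (1/n) log₂ E[G(X^n|Y')] = log₂( 4δ(1−δ) + 1 ). -/

import Mathlib

open Real Filter Finset

/-- Binary Rényi entropy of order `β` (base-2 logarithm). -/
noncomputable def Hb (β p : ℝ) : ℝ := (1 / (1 - β)) * Real.logb 2 (p ^ β + (1 - p) ^ β)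

/-- Binary KL divergence `D(p‖q)` in bits (Lean's `logb 2 0 = 0` gives the `0·log 0 = 0` convention). -/
noncomputable def Dkl (p q : ℝ) : ℝ :=
  p * Real.logb 2 (p / q) + (1 - p) * Real.logb 2 ((1 - p) / (1 - q))

/-- Binary Shannon entropy in bits. -/
noncomputable def binEnt (p : ℝ) : ℝ := -(p * Real.logb 2 p) - (1 - p) * Real.logb 2 (1 - p)

/-- `G` is a guessing function for the distribution `q` on the finite set `S`:
a bijection onto `{1, …, |S|}` ranking more likely elements first. -/
def IsGuessingFunction {S : Type*} [Fintype S] (q : S → ℝ) (G : S → ℕ) : Prop :=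
  Function.Injective G ∧ (∀ x, G x ∈ Finset.Icc 1 (Fintype.card S)) ∧
    ∀ x y, q y < q x → G x < G y

/-- Distribution of `n` i.i.d. Bernoulli(`p`) bits (`true` has probability `p`). -/
noncomputable def bernDist (p : ℝ) (n : ℕ) (x : Fin n → Bool) : ℝ :=
  ∏ i, if x i then p else 1 - p

/-- Joint distribution of a uniform `X^n` and the outputs `Y' = (Y₍₁₎,…,Y₍ₘ₎)` of `m`
independent BSC(`δ`) channels applied to `X^n`. -/
noncomputable def bscJoint (δ : ℝ) (m n : ℕ) (x : Fin n → Bool)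
    (y : Fin m → Fin n → Bool) : ℝ :=
  ((1 : ℝ) / 2) ^ n * ∏ j, ∏ i, (if y j i = x i then 1 - δ else δ)

/-- Conditional distribution of `X^n` given `Y' = y` for `m` independent BSC(`δ`) channels. -/
noncomputable def bscCond (δ : ℝ) (m n : ℕ) (y : Fin m → Fin n → Bool)
    (x : Fin n → Bool) : ℝ :=
  bscJoint δ m n x y / ∑ x', bscJoint δ m n x' y

/-- Joint distribution of a uniform `X^n` and the output of a single BSC(`δ`). -/
noncomputable def bscJoint1 (δ : ℝ) (n : ℕ) (x y : Fin n → Bool) : ℝ :=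
  ((1 : ℝ) / 2) ^ n * ∏ i, (if y i = x i then 1 - δ else δ)

/-- Conditional distribution of `X^n` given the output `y` of a single BSC(`δ`). -/
noncomputable def bscCond1 (δ : ℝ) (n : ℕ) (y x : Fin n → Bool) : ℝ :=
  bscJoint1 δ n x y / ∑ x', bscJoint1 δ n x' y


/-!
Arikan's bounds sandwich the expected number of guesses `∑ q G` of any guessing function
for weights `q ≥ 0` on a finite set `S` between `(∑ √q)² / (1 + ln |S|)` and `(∑ √q)²`.
Both sides are homogeneous in `q`, so they apply to the joint law `P(·, y)` for every side
information `y`, and summing over `y` brackets the expected guesswork by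
`∑_y (∑_x √P(x, y))²`. The channels are memoryless, so this sum factorizes over the `n`
coordinates into `(1 + (2√(δ(1-δ)))^m)^n` for `m` agents, while the loss factor
`1 + n ln 2` is subexponential.
-/

namespace IsGuessingFunction

variable {S : Type*} [Fintype S] {q : S → ℝ} {G : S → ℕ}

lemma of_div_const {c : ℝ} (hc : 0 < c) (hG : IsGuessingFunction (fun x => q x / c) G) :
    IsGuessingFunction q G :=
  ⟨hG.1, hG.2.1, fun x y hxy => hG.2.2 x y (div_lt_div_of_pos_right hxy hc)⟩

lemma image_univ (hG : IsGuessingFunction q G) :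
    univ.image G = Icc 1 (Fintype.card S) := by
  refine eq_of_subset_of_card_le (fun k hk => ?_) ?_
  · obtain ⟨x, -, rfl⟩ := mem_image.mp hk
    exact hG.2.1 x
  · rw [card_image_of_injective _ hG.1, card_univ, Nat.card_Icc, Nat.add_sub_cancel]

lemma card_filter_le (hG : IsGuessingFunction q G) (x : S) :
    #{x' | G x' ≤ G x} = G x := by
  have hx := mem_Icc.mp (hG.2.1 x)
  calc #{x' | G x' ≤ G x} = #(({x' | G x' ≤ G x} : Finset S).image G) :=
        (card_image_of_injective _ hG.1).symm
    _ = #((Icc 1 (Fintype.card S)).filter (· ≤ G x)) := by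
        rw [← image_univ hG, filter_image (p := (· ≤ G x))]
    _ = #(Icc 1 (G x)) := by
        congr 1
        ext k
        simp only [mem_filter, mem_Icc]
        omega
    _ = G x := by rw [Nat.card_Icc, Nat.add_sub_cancel]

lemma le_card_filter_le (hG : IsGuessingFunction q G) (x : S) :
    G x ≤ #{x' | q x ≤ q x'} := by
  rw [← card_filter_le hG x]
  refine card_le_card fun x' hx' => ?_
  simp only [mem_filter, mem_univ, true_and] at hx' ⊢
  by_contra hlt
  exact (hG.2.2 x x' (not_le.mp hlt)).not_ge hx'

lemma sum_inv_eq_harmonic (hG : IsGuessingFunction q G) :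
    ∑ x, ((G x : ℝ))⁻¹ = harmonic (Fintype.card S) := by
  rw [harmonic_eq_sum_Icc, ← image_univ hG, sum_image fun x _ y _ h => hG.1 h]
  push_cast
  rfl

/-- Arikan's upper bound. -/
lemma sum_mul_le_sq_sum_sqrt (hq : ∀ x, 0 ≤ q x) (hG : IsGuessingFunction q G) :
    ∑ x, q x * G x ≤ (∑ x, √(q x)) ^ 2 := by
  have hrank : ∀ x, √(q x) * G x ≤ ∑ x', √(q x') := fun x =>
    calc √(q x) * G x ≤ √(q x) * #{x' | q x ≤ q x'} := by
          gcongr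
          exact_mod_cast le_card_filter_le hG x
      _ = ∑ x' with q x ≤ q x', √(q x) := by rw [sum_const, nsmul_eq_mul, mul_comm]
      _ ≤ ∑ x' with q x ≤ q x', √(q x') :=
          sum_le_sum fun x' hx' => Real.sqrt_le_sqrt (mem_filter.mp hx').2
      _ ≤ ∑ x', √(q x') :=
          sum_le_sum_of_subset_of_nonneg (filter_subset _ _) fun _ _ _ => Real.sqrt_nonneg _
  calc ∑ x, q x * G x = ∑ x, √(q x) * (√(q x) * G x) := by
        simp only [← mul_assoc, Real.mul_self_sqrt (hq _)]
    _ ≤ ∑ x, √(q x) * ∑ x', √(q x') :=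
        sum_le_sum fun x _ => mul_le_mul_of_nonneg_left (hrank x) (Real.sqrt_nonneg _)
    _ = (∑ x, √(q x)) ^ 2 := by rw [← sum_mul, sq]

/-- Arikan's lower bound. -/
lemma sq_sum_sqrt_le_one_add_log_card_mul (hq : ∀ x, 0 ≤ q x) (hG : IsGuessingFunction q G) :
    (∑ x, √(q x)) ^ 2 ≤ (1 + Real.log (Fintype.card S)) * ∑ x, q x * G x := by
  have hG0 : ∀ x, (G x : ℝ) ≠ 0 := fun x => by
    have := (mem_Icc.mp (hG.2.1 x)).1
    positivity
  calc (∑ x, √(q x)) ^ 2 ≤ (∑ x, q x * G x) * ∑ x, ((G x : ℝ))⁻¹ :=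
        sum_sq_le_sum_mul_sum_of_sq_le_mul _ (fun x _ => mul_nonneg (hq x) (Nat.cast_nonneg _))
          (fun x _ => inv_nonneg.mpr (Nat.cast_nonneg _)) fun x _ => by
            rw [Real.sq_sqrt (hq x), mul_assoc, mul_inv_cancel₀ (hG0 x), mul_one]
    _ = harmonic (Fintype.card S) * ∑ x, q x * G x := by rw [sum_inv_eq_harmonic hG, mul_comm]
    _ ≤ (1 + Real.log (Fintype.card S)) * ∑ x, q x * G x := by
        gcongr
        · exact sum_nonneg fun x _ => mul_nonneg (hq x) (Nat.cast_nonneg _)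
        · exact harmonic_le_one_add_log _

end IsGuessingFunction

lemma sum_sq_sum_prod_eq_pow {ι κ α β R : Type*} [Fintype ι] [DecidableEq ι] [Fintype κ]
    [DecidableEq κ] [Fintype α] [Fintype β] [CommSemiring R] (g : (ι → β) → α → R) :
    ∑ y : ι → κ → β, (∑ x : κ → α, ∏ k, g (fun j => y j k) (x k)) ^ 2
      = (∑ v : ι → β, (∑ a, g v a) ^ 2) ^ Fintype.card κ := by
  calc ∑ y : ι → κ → β, (∑ x : κ → α, ∏ k, g (fun j => y j k) (x k)) ^ 2
      = ∑ y : ι → κ → β, ∏ k, (∑ a, g (fun j => y j k) a) ^ 2 := by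
        simp only [← Fintype.prod_sum, prod_pow]
    _ = ∑ z : κ → ι → β, ∏ k, (∑ a, g (z k) a) ^ 2 :=
        ((Equiv.piComm fun (_ : κ) (_ : ι) => β).sum_comp _).symm
    _ = (∑ v : ι → β, (∑ a, g v a) ^ 2) ^ Fintype.card κ := by
        rw [← Fintype.prod_sum fun (_ : κ) v => (∑ a, g v a) ^ 2, prod_const, card_univ]

/-- The joint law of one input bit and its `m` noisy copies. -/
noncomputable def bscLetterJoint (δ : ℝ) (m : ℕ) (v : Fin m → Bool) (b : Bool) : ℝ :=
  1 / 2 * ∏ j, if v j = b then 1 - δ else δ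

section BSC

variable {δ : ℝ} {m n : ℕ}

lemma bscJoint_eq_prod_bscLetterJoint (x : Fin n → Bool) (y : Fin m → Fin n → Bool) :
    bscJoint δ m n x y = ∏ i, bscLetterJoint δ m (fun j => y j i) (x i) := by
  rw [bscJoint, Finset.prod_comm]
  simp only [bscLetterJoint, prod_mul_distrib, prod_const, card_univ, Fintype.card_fin]

lemma bscJoint_pos (hδ : δ ∈ Set.Ioo 0 1) (x : Fin n → Bool) (y : Fin m → Fin n → Bool) :
    0 < bscJoint δ m n x y := by
  have h1 : 0 < 1 - δ := sub_pos.mpr hδ.2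
  have h0 := hδ.1
  unfold bscJoint
  positivity

lemma bscLetterJoint_nonneg (hδ : δ ∈ Set.Icc 0 1) (v : Fin m → Bool) (b : Bool) :
    0 ≤ bscLetterJoint δ m v b := by
  have h1 : 0 ≤ 1 - δ := sub_nonneg.mpr hδ.2
  have h0 := hδ.1
  unfold bscLetterJoint
  positivity

lemma sum_sum_bscLetterJoint : ∑ v, ∑ b, bscLetterJoint δ m v b = 1 := by
  have hcol (b : Bool) : ∑ v : Fin m → Bool, ∏ j, (if v j = b then 1 - δ else δ) = 1 := by
    rw [← Fintype.prod_sum fun (_ : Fin m) c => if c = b then 1 - δ else δ]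
    cases b <;> simp
  rw [sum_comm]
  simp only [bscLetterJoint, ← mul_sum, hcol, Fintype.sum_bool]
  norm_num

lemma bscLetterJoint_true_mul_false (v : Fin m → Bool) :
    bscLetterJoint δ m v true * bscLetterJoint δ m v false = (δ * (1 - δ)) ^ m / 4 := by
  have hpair : ∀ j, (if v j = true then 1 - δ else δ) * (if v j = false then 1 - δ else δ)
      = δ * (1 - δ) := by
    intro j
    cases v j <;> simp [mul_comm]
  rw [bscLetterJoint, bscLetterJoint, mul_mul_mul_comm, ← prod_mul_distrib]
  simp only [hpair, prod_const, card_univ, Fintype.card_fin]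
  ring

lemma sum_sq_sum_sqrt_bscLetterJoint (hδ : δ ∈ Set.Icc 0 1) :
    ∑ v, (∑ b, √(bscLetterJoint δ m v b)) ^ 2 = 1 + (2 * √(δ * (1 - δ))) ^ m := by
  have hδ' : 0 ≤ δ * (1 - δ) := mul_nonneg hδ.1 (sub_nonneg.mpr hδ.2)
  have hcross : ∀ v, √(bscLetterJoint δ m v true * bscLetterJoint δ m v false)
      = √(δ * (1 - δ)) ^ m / 2 := by
    intro v
    rw [bscLetterJoint_true_mul_false,
      ← Real.sqrt_sq (by positivity : 0 ≤ √(δ * (1 - δ)) ^ m / 2),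
      div_pow, ← pow_mul, mul_comm m, pow_mul, Real.sq_sqrt hδ']
    norm_num
  have hexpand : ∀ v, (∑ b, √(bscLetterJoint δ m v b)) ^ 2
      = ∑ b, bscLetterJoint δ m v b
        + 2 * √(bscLetterJoint δ m v true * bscLetterJoint δ m v false) := by
    intro v
    rw [Fintype.sum_bool, Fintype.sum_bool, add_sq, Real.sq_sqrt (bscLetterJoint_nonneg hδ _ _),
      Real.sq_sqrt (bscLetterJoint_nonneg hδ _ _), Real.sqrt_mul (bscLetterJoint_nonneg hδ _ _)]
    ring
  simp only [hexpand, sum_add_distrib, sum_sum_bscLetterJoint, hcross, sum_const, card_univ,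
    Fintype.card_fun, Fintype.card_bool, Fintype.card_fin, nsmul_eq_mul]
  push_cast
  ring

lemma sum_sq_sum_sqrt_bscJoint (hδ : δ ∈ Set.Icc 0 1) :
    ∑ y : Fin m → Fin n → Bool, (∑ x, √(bscJoint δ m n x y)) ^ 2
      = (1 + (2 * √(δ * (1 - δ))) ^ m) ^ n := by
  have hsqrt : ∀ x y, √(bscJoint δ m n x y)
      = ∏ i, √(bscLetterJoint δ m (fun j => y j i) (x i)) := fun x y => by
    rw [bscJoint_eq_prod_bscLetterJoint,
      Real.sqrt_prod _ fun i _ => bscLetterJoint_nonneg hδ _ _]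
  simp only [hsqrt]
  rw [sum_sq_sum_prod_eq_pow (fun v b => √(bscLetterJoint δ m v b)),
    sum_sq_sum_sqrt_bscLetterJoint hδ, Fintype.card_fin]

end BSC

lemma tendsto_log_one_add_mul_div_natCast {a : ℝ} (ha : 0 < a) :
    Tendsto (fun n : ℕ => Real.log (1 + n * a) / n) atTop (nhds 0) := by
  have hlin : Tendsto (fun n : ℕ => 1 + n * a) atTop atTop :=
    tendsto_atTop_add_const_left _ _
      (tendsto_natCast_atTop_atTop.atTop_mul_const ha)
  refine ((Real.tendsto_pow_log_div_mul_add_atTop a⁻¹ (-a⁻¹) 1 (inv_ne_zero ha.ne')).comp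
    hlin).congr fun n => ?_
  simp only [Function.comp_apply, pow_one]
  congr 1
  field_simp
  ring

lemma tendsto_log_div_natCast_of_le_pow_of_pow_le_mul {c : ℝ} {E D : ℕ → ℝ} (hc : 0 < c)
    (hD : ∀ n, 0 < D n) (hDsubexp : Tendsto (fun n => Real.log (D n) / n) atTop (nhds 0))
    (hup : ∀ n, E n ≤ c ^ n) (hlow : ∀ n, c ^ n ≤ D n * E n) :
    Tendsto (fun n => Real.log (E n) / n) atTop (nhds (Real.log c)) := by
  have hE : ∀ n, 0 < E n := fun n => pos_of_mul_pos_right ((pow_pos hc n).trans_le (hlow n))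
    (hD n).le
  have hlower : Tendsto (fun n => Real.log c - Real.log (D n) / n) atTop (nhds (Real.log c)) := by
    simpa using hDsubexp.const_sub (Real.log c)
  refine tendsto_of_tendsto_of_tendsto_of_le_of_le' hlower tendsto_const_nhds ?_ ?_
  · filter_upwards [eventually_gt_atTop 0] with n hn
    have hlog := Real.log_le_log (pow_pos hc n) (hlow n)
    rw [Real.log_pow, Real.log_mul (hD n).ne' (hE n).ne'] at hlog
    rw [sub_le_iff_le_add, ← add_div, le_div_iff₀ (Nat.cast_pos.mpr hn)]
    linarith
  · filter_upwards [eventually_gt_atTop 0] with n hn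
    have hlog := Real.log_le_log (hE n) (hup n)
    rw [Real.log_pow] at hlog
    rwa [div_le_iff₀ (Nat.cast_pos.mpr hn), mul_comm]

theorem tendsto_bsc_guesswork_exponent {δ : ℝ} (hδ : δ ∈ Set.Ioo 0 1) (m : ℕ)
    (G : ∀ n, (Fin m → Fin n → Bool) → (Fin n → Bool) → ℕ)
    (hG : ∀ n y, IsGuessingFunction (bscCond δ m n y) (G n y)) :
    Tendsto
      (fun n : ℕ => (1 / (n : ℝ)) *
        Real.logb 2 (∑ y : Fin m → Fin n → Bool, ∑ x : Fin n → Bool,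
          bscJoint δ m n x y * (G n y x : ℝ)))
      atTop (nhds (Real.logb 2 (1 + (2 * √(δ * (1 - δ))) ^ m))) := by
  have hδ' : δ ∈ Set.Icc 0 1 := Set.Ioo_subset_Icc_self hδ
  have hjoint : ∀ n y, IsGuessingFunction (fun x => bscJoint δ m n x y) (G n y) := fun n y =>
    (hG n y).of_div_const (sum_pos (fun x _ => bscJoint_pos hδ x y) univ_nonempty)
  have hnonneg : ∀ n y x, 0 ≤ bscJoint δ m n x y := fun n y x => (bscJoint_pos hδ x y).le
  have hup : ∀ n, ∑ y, ∑ x, bscJoint δ m n x y * (G n y x : ℝ)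
      ≤ (1 + (2 * √(δ * (1 - δ))) ^ m) ^ n := fun n => by
    rw [← sum_sq_sum_sqrt_bscJoint hδ']
    exact sum_le_sum fun y _ => (hjoint n y).sum_mul_le_sq_sum_sqrt (hnonneg n y)
  have hlow : ∀ n, (1 + (2 * √(δ * (1 - δ))) ^ m) ^ n
      ≤ (1 + n * Real.log 2) * ∑ y, ∑ x, bscJoint δ m n x y * (G n y x : ℝ) := fun n => by
    rw [← sum_sq_sum_sqrt_bscJoint hδ', mul_sum]
    refine sum_le_sum fun y _ => ?_
    simpa [Real.log_pow] using
      (hjoint n y).sq_sum_sqrt_le_one_add_log_card_mul (hnonneg n y)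
  have hlog := tendsto_log_div_natCast_of_le_pow_of_pow_le_mul (by positivity)
    (fun n => by positivity) (tendsto_log_one_add_mul_div_natCast (Real.log_pos one_lt_two))
    hup hlow
  refine (hlog.div_const (Real.log 2)).congr fun n => ?_
  rw [Real.logb]
  ring

/-- Corollary 2 of the paper: the expected guesswork exponent of the
centralized mechanism with two agents under BSC(`δ`) side information is `log₂(4δ(1−δ)+1)`. -/
theorem centralized_bsc_two_agents_expected_guesswork_exponent
    (δ : ℝ) (hδ : δ ∈ Set.Ioo (0 : ℝ) (1 / 2))
    (G : ∀ n, (Fin 2 → Fin n → Bool) → (Fin n → Bool) → ℕ)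
    (hG : ∀ n y, IsGuessingFunction (bscCond δ 2 n y) (G n y)) :
    Tendsto
      (fun n : ℕ => (1 / (n : ℝ)) *
        Real.logb 2 (∑ y : Fin 2 → Fin n → Bool, ∑ x : Fin n → Bool,
          bscJoint δ 2 n x y * (G n y x : ℝ)))
      atTop (nhds (Real.logb 2 (4 * δ * (1 - δ) + 1))) := by
  have hδ' : δ ∈ Set.Ioo 0 1 := Set.Ioo_subset_Ioo_right (by norm_num) hδ
  have hexponent : 1 + (2 * √(δ * (1 - δ))) ^ 2 = 4 * δ * (1 - δ) + 1 := by
    rw [mul_pow, Real.sq_sqrt (mul_nonneg hδ'.1.le (sub_nonneg.mpr hδ'.2.le))]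
    ring
  simpa only [hexponent] using tendsto_bsc_guesswork_exponent hδ' 2 G hG
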